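/- arXiv:1602.05745 — 2 statements merged into one kernel-verified Lean document; each statement's English description precedes it below -/
import Mathlib

section
/- For every t ∈ ℚ with t ≠ 0 and t ≠ 1/4, the point P = (t, t) on the elliptic curve E_t : y² = x³ - (2t-1)x² + t²x has order exactly 4 in the group E_t(ℚ). -/
/-!
Doubling `P = (t, t)` uses the tangent slope `(3t² - 2(2t - 1)t + t²) / 2t = 1`; the tangent line
`y = x` meets the curve again only at the origin, so `2P = (0, 0)`. The origin has `y = 0`, hence is
its own negative, so `4P = 0` while `2P ≠ 0`.
-/

namespace WeierstrassCurve

variable {F : Type*} [Field F]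

abbrev fourTorsionCurve (t : F) : WeierstrassCurve F :=
  ⟨0, -(2 * t - 1), 0, t ^ 2, 0⟩

namespace Affine

variable {t : F}

lemma negY_fourTorsionCurve (x y : F) : (fourTorsionCurve t).toAffine.negY x y = -y := by
  simp [negY]

lemma self_ne_negY_fourTorsionCurve (h2 : (2 : F) ≠ 0) (ht : t ≠ 0) :
    t ≠ (fourTorsionCurve t).toAffine.negY t t := by
  rw [negY_fourTorsionCurve]
  intro h
  have h2t : 2 * t = 0 := by linear_combination h
  exact ht ((mul_eq_zero.1 h2t).resolve_left h2)

lemma nonsingular_fourTorsionCurve_zero (ht : t ≠ 0) :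
    (fourTorsionCurve t).toAffine.Nonsingular 0 0 :=
  nonsingular_zero.2 ⟨rfl, .inr (pow_ne_zero 2 ht)⟩

variable [DecidableEq F]

lemma slope_fourTorsionCurve_self (h2 : (2 : F) ≠ 0) (ht : t ≠ 0) :
    (fourTorsionCurve t).toAffine.slope t t t t = 1 := by
  have hy := self_ne_negY_fourTorsionCurve h2 ht
  rw [slope_of_Y_ne rfl hy, div_eq_one_iff_eq (sub_ne_zero.2 hy), negY_fourTorsionCurve]
  ring

namespace Point

lemma two_nsmul_some_fourTorsionCurve (h2 : (2 : F) ≠ 0) (ht : t ≠ 0)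
    (h : (fourTorsionCurve t).toAffine.Nonsingular t t) :
    2 • some t t h = some 0 0 (nonsingular_fourTorsionCurve_zero ht) := by
  have hs := slope_fourTorsionCurve_self h2 ht
  rw [two_nsmul, add_self_of_Y_ne (self_ne_negY_fourTorsionCurve h2 ht), some.injEq]
  constructor
  · rw [addX, hs]; ring
  · rw [addY, negAddY, addX, hs, negY_fourTorsionCurve]; ring

lemma two_nsmul_some_fourTorsionCurve_zero (ht : t ≠ 0) :
    2 • some 0 0 (nonsingular_fourTorsionCurve_zero ht) = 0 := by
  rw [two_nsmul]
  exact add_self_of_Y_eq (by simp [negY])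

end Point

end Affine

end WeierstrassCurve

open WeierstrassCurve.Affine.Point in
theorem stmt_6_general (t : ℚ) (ht0 : t ≠ 0)
    (h : (⟨0, -(2 * t - 1), 0, t ^ 2, 0⟩ : WeierstrassCurve ℚ).toAffine.Nonsingular t t) :
    addOrderOf (WeierstrassCurve.Affine.Point.some t t h) = 4 := by
  have h2P := two_nsmul_some_fourTorsionCurve two_ne_zero ht0 h
  refine addOrderOf_eq_prime_pow (p := 2) (n := 1) ?_ ?_
  · rw [pow_one, h2P]
    exact some_ne_zero _
  · rw [show 2 ^ (1 + 1) = 2 * 2 from rfl, mul_nsmul, h2P]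
    exact two_nsmul_some_fourTorsionCurve_zero ht0

theorem stmt_6 (t : ℚ) (ht0 : t ≠ 0) (ht4 : t ≠ 1 / 4)
    (h : (⟨0, -(2 * t - 1), 0, t ^ 2, 0⟩ : WeierstrassCurve ℚ).toAffine.Nonsingular t t) :
    addOrderOf (WeierstrassCurve.Affine.Point.some t t h) = 4 :=
  stmt_6_general t ht0 h
end

section
/- Let K be a number field, O_K its ring of integers, q a prime ideal above 2 with ramification index e, m > e. Let p be an odd rational prime and (a_r) a sequence in O_K with a_0 = 1, a_1 ≡ 0 (mod q^m), and a_r = a_1 a_{r-1} - p a_{r-2} for r ≥ 2. Then a_{2n} ≡ (-p)^n (mod q^m) for all n ≥ 1, and in particular a_{2n} ≠ 0. -/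
/-!
Modulo `q ^ m` the recurrence collapses to `a (r + 2) ≡ -p * a r`, so `a (2 * n) ≡ (-p) ^ n`.
Since `p` is odd and `2 ∈ q`, `p ∉ q`, so `(-p) ^ n ∉ q` and hence `a (2 * n) ∉ q`.
-/

theorem Ideal.natCast_notMem_of_odd {R : Type*} [CommRing R] {I : Ideal R} (hI : I ≠ ⊤)
    (h2 : (2 : R) ∈ I) {p : ℕ} (hp : Odd p) : (p : R) ∉ I := by
  obtain ⟨k, rfl⟩ := hp
  intro hmem
  have h1 : (1 : R) ∈ I := by simpa using I.sub_mem hmem (I.mul_mem_right (k : R) h2)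
  exact hI ((Ideal.eq_top_iff_one I).2 h1)

theorem Ideal.sub_neg_pow_mem_of_recurrence {R : Type*} [CommRing R] {I : Ideal R} {c : R}
    {a : ℕ → R} (h0 : a 0 = 1) (h1 : a 1 ∈ I)
    (hrec : ∀ r, a (r + 2) = a 1 * a (r + 1) - c * a r) (n : ℕ) :
    a (2 * n) - (-c) ^ n ∈ I := by
  induction n with
  | zero => simp [h0]
  | succ n ih =>
    have hstep : a (2 * (n + 1)) - (-c) ^ (n + 1) =
        a 1 * a (2 * n + 1) + -c * (a (2 * n) - (-c) ^ n) := by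
      rw [show 2 * (n + 1) = 2 * n + 2 by ring, hrec]
      ring
    rw [hstep]
    exact I.add_mem (I.mul_mem_right _ h1) (I.mul_mem_left _ ih)

theorem stmt_13_general (K : Type*) [Field K]
    (q : Ideal (NumberField.RingOfIntegers K)) (hq : q.IsMaximal)
    (h2 : (2 : NumberField.RingOfIntegers K) ∈ q)
    (e : ℕ)
    (m : ℕ) (hm : e < m)
    (p : ℕ) (hpodd : Odd p)
    (a : ℕ → NumberField.RingOfIntegers K)
    (h0 : a 0 = 1) (h1 : a 1 ∈ q ^ m)
    (hrec : ∀ r, 2 ≤ r →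
      a r = a 1 * a (r - 1) - (p : NumberField.RingOfIntegers K) * a (r - 2)) :
    ∀ n, 1 ≤ n →
      a (2 * n) - (-(p : NumberField.RingOfIntegers K)) ^ n ∈ q ^ m ∧ a (2 * n) ≠ 0 := by
  intro n _
  have hcong := Ideal.sub_neg_pow_mem_of_recurrence h0 h1
    (fun r => by simpa using hrec (r + 2) (by omega)) n
  refine ⟨hcong, fun hzero => ?_⟩
  have hunit : (-(p : NumberField.RingOfIntegers K)) ^ n ∉ q := fun hmem =>
    Ideal.natCast_notMem_of_odd hq.ne_top h2 hpodd
      (by simpa using hq.isPrime.mem_of_pow_mem n hmem)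
  exact hunit (by simpa [hzero] using Ideal.pow_le_self (by omega) hcong)

theorem stmt_13 (K : Type*) [Field K] [NumberField K]
    (q : Ideal (NumberField.RingOfIntegers K)) (hq : q.IsMaximal)
    (h2 : (2 : NumberField.RingOfIntegers K) ∈ q)
    (e : ℕ)
    (he : e = Ideal.ramificationIdx'
      (Ideal.span {(2 : ℤ)}) q)
    (m : ℕ) (hm : e < m)
    (p : ℕ) (hp : p.Prime) (hpodd : Odd p)
    (a : ℕ → NumberField.RingOfIntegers K)
    (h0 : a 0 = 1) (h1 : a 1 ∈ q ^ m)
    (hrec : ∀ r, 2 ≤ r →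
      a r = a 1 * a (r - 1) - (p : NumberField.RingOfIntegers K) * a (r - 2)) :
    ∀ n, 1 ≤ n →
      a (2 * n) - (-(p : NumberField.RingOfIntegers K)) ^ n ∈ q ^ m ∧ a (2 * n) ≠ 0 :=
  stmt_13_general K q hq h2 e m hm p hpodd a h0 h1 hrec
end
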